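/- For every integer n ≥ 3 and every integer l with 0 ≤ l ≤ ⌊n/3⌋, each of the polynomials P_l, Q_l, R_l is monic of degree l, all of its coefficients are positive (for l ≥ 1), and all of its roots are real, negative and simple. -/

import Mathlib

/-- Coefficient in the recurrence for `P_l`. -/
noncomputable def cP (n l : ℕ) : ℝ :=
  ((n : ℝ) - 3 * l + 2) * ((n : ℝ) - 3 * l + 3) * (3 * (l : ℝ) - 2) * (3 * (l : ℝ) - 1)

/-- Coefficient in the recurrence for `Q_l`. -/
noncomputable def cQ (n l : ℕ) : ℝ :=
  ((n : ℝ) - 3 * l + 1) * ((n : ℝ) - 3 * l + 2) * (3 * (l : ℝ) - 1) * (3 * (l : ℝ))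

/-- Coefficient in the recurrence for `R_l`. -/
noncomputable def cR (n l : ℕ) : ℝ :=
  ((n : ℝ) - 3 * l) * ((n : ℝ) - 3 * l + 1) * (3 * (l : ℝ)) * (3 * (l : ℝ) + 1)

/-- The triple `(P_l, Q_l, R_l)` of real polynomials in `ξ` defined by
`P₀ = Q₀ = R₀ = 1` and
`P_l = ξ·R_{l-1} + (n-3l+2)(n-3l+3)(3l-2)(3l-1)·P_{l-1}`,
`Q_l = P_l + (n-3l+1)(n-3l+2)(3l-1)(3l)·Q_{l-1}`,
`R_l = Q_l + (n-3l)(n-3l+1)(3l)(3l+1)·R_{l-1}`. -/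
noncomputable def PQR (n : ℕ) : ℕ → Polynomial ℝ × Polynomial ℝ × Polynomial ℝ
  | 0 => (1, 1, 1)
  | l + 1 =>
      let prev := PQR n l
      let P := Polynomial.X * prev.2.2 + Polynomial.C (cP n (l + 1)) * prev.1
      let Q := P + Polynomial.C (cQ n (l + 1)) * prev.2.1
      let R := Q + Polynomial.C (cR n (l + 1)) * prev.2.2
      (P, Q, R)

/-- A real polynomial has all roots real, negative and simple: every complex root is
real and negative, and has multiplicity one. -/
def NegRealSimpleRoots (p : Polynomial ℝ) : Prop :=
  ∀ z : ℂ, (p.map (algebraMap ℝ ℂ)).eval z = 0 →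
    z.im = 0 ∧ z.re < 0 ∧ (p.map (algebraMap ℝ ℂ)).rootMultiplicity z = 1

/-!
By induction on `l`, the roots of `P_l, Q_l, R_l` are real and arranged as
`r₀ ≤ q₀ < p₀ < r₁ ≤ q₁ < p₁ < ⋯ < r_{l-1} ≤ q_{l-1} < p_{l-1} < 0`.
When `3 (l + 1) ≤ n` the coefficients of the recurrence are positive (the last one nonnegative),
so at `r₀ < ⋯ < r_{l-1} < 0`, where the term `ξ R_l` vanishes, each of `P_{l+1}, Q_{l+1}, R_{l+1}`
alternates in sign. The intermediate value theorem then gives `l + 1` real roots of each,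
interlacing the `r_i`, and comparing signs at the new roots of `P_{l+1}` and `Q_{l+1}` restores
the arrangement at level `l + 1`. A monic polynomial with distinct negative roots has positive
coefficients and simple negative roots.
-/
open Polynomial Finset

lemma Multiset.nodup_map_range_of_injOn {α : Type*} {l : ℕ} {x : ℕ → α}
    (hx : Set.InjOn x (Set.Iio l)) :
    ((Multiset.range l).map x).Nodup :=
  (Multiset.nodup_range l).map_on fun _ hi _ hj hij ↦
    hx (Set.mem_Iio.2 (Multiset.mem_range.1 hi)) (Set.mem_Iio.2 (Multiset.mem_range.1 hj)) hij

section RootPoly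

variable {R : Type*} [CommRing R]

noncomputable def rootPoly (l : ℕ) (x : ℕ → R) : R[X] :=
  ∏ i ∈ range l, (X - C (x i))

variable {l : ℕ} {x : ℕ → R}

lemma rootPoly_zero (x : ℕ → R) : rootPoly 0 x = 1 := prod_range_zero _

lemma rootPoly_succ (l : ℕ) (x : ℕ → R) : rootPoly (l + 1) x = rootPoly l x * (X - C (x l)) :=
  prod_range_succ _ _

lemma rootPoly_succ' (l : ℕ) (x : ℕ → R) :
    rootPoly (l + 1) x = (X - C (x 0)) * rootPoly l (fun i ↦ x (i + 1)) := by
  rw [rootPoly, prod_range_succ', mul_comm, rootPoly]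

lemma rootPoly_eq_multiset_prod (l : ℕ) (x : ℕ → R) :
    rootPoly l x = (((Multiset.range l).map x).map fun a ↦ X - C a).prod := by
  rw [Multiset.map_map]; rfl

lemma monic_rootPoly : (rootPoly l x).Monic :=
  monic_prod_of_monic _ _ fun i _ ↦ monic_X_sub_C (x i)

lemma natDegree_rootPoly [Nontrivial R] : (rootPoly l x).natDegree = l := by
  simp [rootPoly, natDegree_prod_of_monic _ _ fun i _ ↦ monic_X_sub_C (x i)]

lemma eval_rootPoly (y : R) : (rootPoly l x).eval y = ∏ i ∈ range l, (y - x i) := by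
  simp [rootPoly, eval_prod]

lemma eval_rootPoly_self {k : ℕ} (hk : k < l) : (rootPoly l x).eval (x k) = 0 :=
  eval_rootPoly (x k) ▸ prod_eq_zero (mem_range.2 hk) (sub_self _)

lemma map_rootPoly {S : Type*} [CommRing S] (f : R →+* S) :
    (rootPoly l x).map f = rootPoly l (f ∘ x) := by
  simp [rootPoly, Polynomial.map_prod]

lemma roots_rootPoly [IsDomain R] : (rootPoly l x).roots = (Multiset.range l).map x := by
  rw [rootPoly_eq_multiset_prod, roots_multiset_prod_X_sub_C]

lemma Polynomial.Monic.exists_eq_X_sub_C_mul_rootPoly [IsDomain R] {F : R[X]} (hF : F.Monic)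
    (hdeg : F.natDegree = l + 1) (hx : Set.InjOn x (Set.Iio l)) (hroot : ∀ i < l, F.IsRoot (x i)) :
    ∃ a, F = (X - C a) * rootPoly l x := by
  have hdvd : rootPoly l x ∣ F := by
    rw [rootPoly_eq_multiset_prod, Multiset.prod_X_sub_C_dvd_iff_le_roots hF.ne_zero,
      Multiset.le_iff_subset (Multiset.nodup_map_range_of_injOn hx)]
    intro y hy
    obtain ⟨i, hi, rfl⟩ := Multiset.mem_map.1 hy
    exact (mem_roots hF.ne_zero).2 (hroot i (Multiset.mem_range.1 hi))
  obtain ⟨g, rfl⟩ := hdvd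
  have hg : g.Monic := monic_rootPoly.of_mul_monic_left hF
  have hg1 : g.natDegree = 1 := by
    rw [monic_rootPoly.natDegree_mul hg, natDegree_rootPoly] at hdeg
    omega
  obtain ⟨c, rfl⟩ : ∃ c, g = X + C c := ⟨_, hg.eq_X_add_C hg1⟩
  exact ⟨-c, by rw [mul_comm, map_neg, sub_neg_eq_add]⟩

end RootPoly

section Ordered

variable {R : Type*} [CommRing R] [LinearOrder R] [IsStrictOrderedRing R] {l k : ℕ} {x : ℕ → R}
  {y : R}

-- Signs are written `(-1) ^ (l + k)` rather than `(-1) ^ (l - k)` to avoid truncated subtraction.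
lemma neg_one_pow_mul_eval_rootPoly_pos (hkl : k ≤ l) (hlt : ∀ i < k, x i < y)
    (hgt : ∀ i, k ≤ i → i < l → y < x i) : 0 < (-1) ^ (l + k) * (rootPoly l x).eval y := by
  induction l, hkl using Nat.le_induction with
  | base =>
    rw [Even.neg_one_pow ⟨k, rfl⟩, one_mul, eval_rootPoly]
    exact prod_pos fun i hi ↦ sub_pos.2 (hlt i (mem_range.1 hi))
  | succ l hkl ih =>
    rw [rootPoly_succ, eval_mul, eval_sub, eval_X, eval_C]
    convert mul_pos (ih fun i hki hil ↦ hgt i hki (by omega)) (sub_pos.2 (hgt l hkl (by omega)))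
      using 1
    ring

lemma neg_one_pow_mul_eval_rootPoly_nonneg (hkl : k ≤ l) (hlt : ∀ i < k, x i < y)
    (hge : ∀ i, k ≤ i → i < l → y ≤ x i) : 0 ≤ (-1) ^ (l + k) * (rootPoly l x).eval y := by
  by_cases hy : ∃ i, k ≤ i ∧ i < l ∧ y = x i
  · obtain ⟨i, -, hil, rfl⟩ := hy
    rw [eval_rootPoly_self hil, mul_zero]
  · push Not at hy
    exact (neg_one_pow_mul_eval_rootPoly_pos hkl hlt fun i hki hil ↦
      (hge i hki hil).lt_of_ne (hy i hki hil)).le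

lemma le_of_neg_one_pow_mul_eval_rootPoly_nonneg (hk : k < l) (hlt : ∀ i < k, x i < y)
    (hgt : ∀ i, k < i → i < l → y < x i) (h : 0 ≤ (-1) ^ (l + k + 1) * (rootPoly l x).eval y) :
    x k ≤ y := by
  by_contra! hy
  have := neg_one_pow_mul_eval_rootPoly_pos hk.le hlt fun i hki hil ↦
    hki.lt_or_eq.elim (hgt i · hil) (· ▸ hy)
  rw [pow_succ] at h
  linarith

lemma lt_of_neg_one_pow_mul_eval_rootPoly_pos (hk : k < l) (hlt : ∀ i < k, x i < y)
    (hgt : ∀ i, k < i → i < l → y < x i) (h : 0 < (-1) ^ (l + k + 1) * (rootPoly l x).eval y) :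
    x k < y := by
  refine (le_of_neg_one_pow_mul_eval_rootPoly_nonneg hk hlt hgt h.le).lt_of_ne fun hy ↦ ?_
  rw [← hy, eval_rootPoly_self hk, mul_zero] at h
  exact h.false

lemma coeff_rootPoly_pos (hx : ∀ i < l, x i < 0) {j : ℕ} (hj : j ≤ l) :
    0 < (rootPoly l x).coeff j := by
  induction l generalizing j with
  | zero => simp [rootPoly_zero, Nat.le_zero.1 hj]
  | succ l ih =>
    have ih' : ∀ j ≤ l, 0 < (rootPoly l x).coeff j := fun j hj ↦ ih (fun i hi ↦ hx i (by omega)) hj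
    have hxl := hx l (by omega)
    rw [rootPoly_succ]
    rcases j with _ | j
    · rw [mul_coeff_zero]
      simpa using mul_pos (ih' 0 (Nat.zero_le l)) (neg_pos.2 hxl)
    · rw [coeff_mul_X_sub_C]
      have hnext : 0 ≤ (rootPoly l x).coeff (j + 1) := by
        rcases Nat.lt_or_ge l (j + 1) with h | h
        · rw [coeff_eq_zero_of_natDegree_lt (natDegree_rootPoly.trans_lt h)]
        · exact (ih' _ h).le
      nlinarith [ih' j (by omega)]

end Ordered

lemma negRealSimpleRoots_rootPoly {l : ℕ} {x : ℕ → ℝ} (hx : Set.InjOn x (Set.Iio l))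
    (hneg : ∀ i < l, x i < 0) : NegRealSimpleRoots (rootPoly l x) := by
  classical
  intro z hz
  rw [map_rootPoly] at hz ⊢
  rw [eval_rootPoly, prod_eq_zero_iff] at hz
  obtain ⟨i, hi, hzi⟩ := hz
  obtain rfl : z = x i := sub_eq_zero.1 hzi
  rw [mem_range] at hi
  refine ⟨Complex.ofReal_im _, by simpa using hneg i hi, ?_⟩
  have hinj : Set.InjOn ((algebraMap ℝ ℂ) ∘ x) (Set.Iio l) :=
    Complex.ofReal_injective.comp_injOn hx
  rw [← count_roots, roots_rootPoly]
  exact Multiset.count_eq_one_of_mem (Multiset.nodup_map_range_of_injOn hinj)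
    (Multiset.mem_map_of_mem _ (Multiset.mem_range.2 hi))

lemma Polynomial.exists_mem_Ioo_isRoot_of_mul_neg (F : ℝ[X]) {a b : ℝ} (hab : a < b)
    (h : F.eval a * F.eval b < 0) : ∃ y ∈ Set.Ioo a b, F.IsRoot y := by
  rcases mul_neg_iff.1 h with ⟨ha, hb⟩ | ⟨ha, hb⟩
  · exact intermediate_value_Ioo' hab.le F.continuousOn ⟨hb, ha⟩
  · exact intermediate_value_Ioo hab.le F.continuousOn ⟨ha, hb⟩

structure Interlaces (l : ℕ) (u t : ℕ → ℝ) : Prop where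
  lt : ∀ i ≤ l, u i < t i
  lt_succ : ∀ i < l, t i < u (i + 1)

namespace Interlaces

variable {l i j : ℕ} {u t : ℕ → ℝ}

lemma monotoneOn (h : Interlaces l u t) : MonotoneOn u (Set.Iic l) :=
  (strictMonoOn_Iic_of_lt_succ fun i hi ↦ by
    simpa using (h.lt i hi.le).trans (h.lt_succ i hi)).monotoneOn

lemma le (h : Interlaces l u t) (hij : i ≤ j) (hj : j ≤ l) : u i ≤ u j :=
  h.monotoneOn (Set.mem_Iic.2 (hij.trans hj)) (Set.mem_Iic.2 hj) hij

lemma lt_of_le (h : Interlaces l u t) (hij : i ≤ j) (hj : j ≤ l) : u i < t j :=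
  (h.le hij hj).trans_lt (h.lt j hj)

lemma lt_of_lt (h : Interlaces l u t) (hij : i < j) (hj : j ≤ l) : t i < u j :=
  (h.lt_succ i (by omega)).trans_le (h.le hij hj)

end Interlaces

theorem exists_interlaces_of_sign_alternation {l : ℕ} {F : ℝ[X]} {t : ℕ → ℝ} (hF : F.Monic)
    (hdeg : F.natDegree = l + 1) (ht : ∀ i < l, t i < t (i + 1))
    (hsign : ∀ j ≤ l, 0 < (-1) ^ (l + j) * F.eval (t j)) :
    ∃ u, F = rootPoly (l + 1) u ∧ Interlaces l u t := by
  have hgap : ∀ i < l, ∃ y ∈ Set.Ioo (t i) (t (i + 1)), F.IsRoot y := by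
    intro i hi
    refine F.exists_mem_Ioo_isRoot_of_mul_neg (ht i hi) ?_
    have h₀ := hsign i hi.le
    have h₁ := hsign (i + 1) hi
    have hsq : ((-1 : ℝ) ^ (l + i)) ^ 2 = 1 := by rw [← pow_mul, Even.neg_one_pow ⟨l + i, by ring⟩]
    rw [← add_assoc, pow_succ] at h₁
    nlinarith
  choose! f hf hroot using hgap
  have ht_le : ∀ {i j}, i ≤ j → j ≤ l → t i ≤ t j := fun hij hj ↦
    (strictMonoOn_Iic_of_lt_succ fun i hi ↦ by simpa using ht i hi).monotoneOn
      (Set.mem_Iic.2 (hij.trans hj)) (Set.mem_Iic.2 hj) hij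
  have hf_mono : StrictMonoOn f (Set.Iio l) := fun i _ j hj hij ↦
    ((hf i (hij.trans hj)).2.trans_le (ht_le hij (le_of_lt hj))).trans (hf j hj).1
  obtain ⟨a, rfl⟩ := hF.exists_eq_X_sub_C_mul_rootPoly hdeg hf_mono.injOn hroot
  -- `F (t 0) = (t 0 - a) * ∏ (t 0 - f i)`, and both `F (t 0)` and the product have sign `(-1) ^ l`.
  have ha : a < t 0 := by
    have hF0 := hsign 0 (Nat.zero_le l)
    have hf0 := neg_one_pow_mul_eval_rootPoly_pos (x := f) (y := t 0) (Nat.zero_le l)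
      (fun _ hi ↦ (Nat.not_lt_zero _ hi).elim)
      (fun i _ hi ↦ (ht_le (Nat.zero_le i) hi.le).trans_lt (hf i hi).1)
    rw [eval_mul, eval_sub, eval_X, eval_C, mul_left_comm] at hF0
    exact sub_pos.1 (pos_of_mul_pos_left hF0 hf0.le)
  let u : ℕ → ℝ := fun | 0 => a | i + 1 => f i
  refine ⟨u, rootPoly_succ' l u |>.symm, fun i hi ↦ ?_, fun i hi ↦ (hf i hi).1⟩
  rcases i with _ | i
  exacts [ha, (hf i (by omega)).2]

/-- The arrangement `r 0 ≤ q 0 < p 0 < r 1 ≤ ⋯ < r (l - 1) ≤ q (l - 1) < p (l - 1) < r l = 0` of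
the roots of `P_l, Q_l, R_l`; the sentinel `r l = 0` records that all of them are negative. -/
structure Interlaced (l : ℕ) (p q r : ℕ → ℝ) : Prop where
  r_last : r l = 0
  r_le_q : ∀ i < l, r i ≤ q i
  q_lt_p : ∀ i < l, q i < p i
  p_lt_r : ∀ i < l, p i < r (i + 1)

namespace Interlaced

variable {l : ℕ} {p q r : ℕ → ℝ} {i j : ℕ}

lemma r_lt_succ (h : Interlaced l p q r) (hi : i < l) : r i < r (i + 1) :=
  ((h.r_le_q i hi).trans_lt (h.q_lt_p i hi)).trans (h.p_lt_r i hi)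

lemma r_strictMonoOn (h : Interlaced l p q r) : StrictMonoOn r (Set.Iic l) :=
  strictMonoOn_Iic_of_lt_succ fun i hi ↦ by simpa using h.r_lt_succ hi

lemma r_lt (h : Interlaced l p q r) (hij : i < j) (hj : j ≤ l) : r i < r j :=
  h.r_strictMonoOn (Set.mem_Iic.2 (hij.le.trans hj)) (Set.mem_Iic.2 hj) hij

lemma r_le (h : Interlaced l p q r) (hij : i ≤ j) (hj : j ≤ l) : r i ≤ r j :=
  h.r_strictMonoOn.monotoneOn (Set.mem_Iic.2 (hij.trans hj)) (Set.mem_Iic.2 hj) hij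

lemma r_le_q_of_le (h : Interlaced l p q r) (hij : i ≤ j) (hj : j < l) : r i ≤ q j :=
  (h.r_le hij hj.le).trans (h.r_le_q j hj)

lemma r_lt_p_of_le (h : Interlaced l p q r) (hij : i ≤ j) (hj : j < l) : r i < p j :=
  (h.r_le_q_of_le hij hj).trans_lt (h.q_lt_p j hj)

lemma p_lt_r_of_lt (h : Interlaced l p q r) (hij : i < j) (hj : j ≤ l) : p i < r j :=
  (h.p_lt_r i (by omega)).trans_le (h.r_le hij hj)

lemma q_lt_r_of_lt (h : Interlaced l p q r) (hij : i < j) (hj : j ≤ l) : q i < r j :=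
  (h.q_lt_p i (by omega)).trans (h.p_lt_r_of_lt hij hj)

lemma p_strictMonoOn (h : Interlaced l p q r) : StrictMonoOn p (Set.Iio l) := fun _ _ _ hj hij ↦
  (h.p_lt_r_of_lt hij hj.le).trans (h.r_lt_p_of_le le_rfl hj)

lemma q_strictMonoOn (h : Interlaced l p q r) : StrictMonoOn q (Set.Iio l) := fun _ _ _ hj hij ↦
  (h.q_lt_r_of_lt hij hj.le).trans_le (h.r_le_q_of_le le_rfl hj)

lemma p_neg (h : Interlaced l p q r) (hi : i < l) : p i < 0 :=
  h.r_last ▸ h.p_lt_r_of_lt hi le_rfl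

lemma q_neg (h : Interlaced l p q r) (hi : i < l) : q i < 0 :=
  (h.q_lt_p i hi).trans (h.p_neg hi)

lemma r_neg (h : Interlaced l p q r) (hi : i < l) : r i < 0 :=
  h.r_last ▸ h.r_lt hi le_rfl

lemma sign_p (h : Interlaced l p q r) (hj : j ≤ l) :
    0 < (-1) ^ (l + j) * (rootPoly l p).eval (r j) :=
  neg_one_pow_mul_eval_rootPoly_pos hj (fun _ hi ↦ h.p_lt_r_of_lt hi hj)
    fun _ hji hil ↦ h.r_lt_p_of_le hji hil

lemma sign_q (h : Interlaced l p q r) (hj : j ≤ l) :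
    0 ≤ (-1) ^ (l + j) * (rootPoly l q).eval (r j) :=
  neg_one_pow_mul_eval_rootPoly_nonneg hj (fun _ hi ↦ h.q_lt_r_of_lt hi hj)
    fun _ hji hil ↦ h.r_le_q_of_le hji hil

lemma sign_r (h : Interlaced l p q r) (hj : j ≤ l) :
    0 ≤ (-1) ^ (l + j) * (rootPoly l r).eval (r j) :=
  neg_one_pow_mul_eval_rootPoly_nonneg hj (fun _ hi ↦ h.r_lt hi hj)
    fun _ hji hil ↦ h.r_le hji hil.le

lemma r_mul_eval_r (h : Interlaced l p q r) (hj : j ≤ l) : r j * (rootPoly l r).eval (r j) = 0 := by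
  rcases hj.lt_or_eq with hj | rfl
  · rw [eval_rootPoly_self hj, mul_zero]
  · rw [h.r_last, zero_mul]

end Interlaced

lemma Polynomial.Monic.add_C_mul_of_natDegree_le {R : Type*} [CommRing R] [Nontrivial R]
    {l : ℕ} {F S : R[X]} (hF : F.Monic) (hFd : F.natDegree = l + 1) (hS : S.natDegree ≤ l) (c : R) :
    (F + C c * S).Monic ∧ (F + C c * S).natDegree = l + 1 := by
  have hlt : (C c * S).degree < F.degree :=
    degree_lt_degree ((natDegree_C_mul_le c S).trans_lt (by omega))
  exact ⟨hF.add_of_left hlt, (natDegree_add_eq_left_of_degree_lt hlt).trans hFd⟩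

namespace Interlaced

variable {l : ℕ} {p q r u v w : ℕ → ℝ} {a b c : ℝ}

lemma sign_X_mul_add (h : Interlaced l p q r) (ha : 0 < a) {j : ℕ} (hj : j ≤ l) :
    0 < (-1) ^ (l + j) * (X * rootPoly l r + C a * rootPoly l p).eval (r j) := by
  rw [eval_add, eval_mul, eval_X, h.r_mul_eval_r hj, zero_add, eval_mul, eval_C, mul_left_comm]
  exact mul_pos ha (h.sign_p hj)

lemma p_lt_of_interlaces (h : Interlaced l p q r) (hu : Interlaces l u r) (ha : 0 < a)
    (hF : rootPoly (l + 1) u = X * rootPoly l r + C a * rootPoly l p) {j : ℕ} (hj : j < l) :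
    p j < u (j + 1) := by
  have hroot : u (j + 1) * (rootPoly l r).eval (u (j + 1)) + a * (rootPoly l p).eval (u (j + 1))
      = 0 := by
    have := congrArg (eval (u (j + 1))) hF
    rw [eval_rootPoly_self (by omega)] at this
    simpa using this.symm
  set y := u (j + 1)
  -- Since `y < 0`, the root equation `y R(y) + a P(y) = 0` gives `P(y)` the sign of `R(y)`.
  have hy : y < 0 := h.r_last ▸ hu.lt_of_le (by omega) le_rfl
  have hR : 0 < (-1) ^ (l + (j + 1)) * (rootPoly l r).eval y :=
    neg_one_pow_mul_eval_rootPoly_pos (by omega) (fun _ hi ↦ hu.lt_of_lt hi (by omega))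
      fun _ hji hil ↦ hu.lt_of_le hji hil.le
  refine lt_of_neg_one_pow_mul_eval_rootPoly_pos hj
    (fun _ hi ↦ (h.p_lt_r_of_lt hi hj.le).trans (hu.lt_of_lt (Nat.lt_succ_self j) hj))
    (fun i hji hil ↦ (hu.lt_of_le hji hil.le).trans (h.r_lt_p_of_le le_rfl hil)) ?_
  refine pos_of_mul_pos_right (a := a) ?_ ha.le
  have : a * ((-1) ^ (l + j + 1) * (rootPoly l p).eval y)
      = -y * ((-1) ^ (l + (j + 1)) * (rootPoly l r).eval y) := by
    linear_combination (-1 : ℝ) ^ (l + j + 1) * hroot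
  rw [this]
  exact mul_pos (neg_pos.2 hy) hR

lemma lt_of_interlaces (h : Interlaced l p q r) (hu : Interlaces l u r) (hv : Interlaces l v r)
    (hpu : ∀ j < l, p j < u (j + 1)) (hb : 0 < b)
    (hG : rootPoly (l + 1) v = rootPoly (l + 1) u + C b * rootPoly l q) {i : ℕ} (hi : i ≤ l) :
    v i < u i := by
  have hQ : 0 < (-1) ^ (l + i) * (rootPoly l q).eval (u i) :=
    neg_one_pow_mul_eval_rootPoly_pos hi
      (fun m hm ↦ ((h.q_lt_p m (by omega)).trans (hpu m (by omega))).trans_le (hu.le hm hi))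
      fun m hmi hml ↦ (hu.lt_of_le hmi hml.le).trans_le (h.r_le_q m hml)
  refine lt_of_neg_one_pow_mul_eval_rootPoly_pos (show i < l + 1 by omega)
    (fun m hm ↦ (hv.lt m (by omega)).trans (hu.lt_of_lt hm hi))
    (fun m him hml ↦ (hu.lt i hi).trans (hv.lt_of_lt him (by omega))) ?_
  rw [hG, eval_add, eval_rootPoly_self (show i < l + 1 by omega), eval_mul, eval_C, zero_add]
  convert mul_pos hb hQ using 1
  ring

end Interlaced

lemma Interlaces.le_of_eq_add_C_mul {l : ℕ} {r v w : ℕ → ℝ} {c : ℝ} (hv : Interlaces l v r)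
    (hw : Interlaces l w r) (hc : 0 ≤ c)
    (hH : rootPoly (l + 1) w = rootPoly (l + 1) v + C c * rootPoly l r) {i : ℕ} (hi : i ≤ l) :
    w i ≤ v i := by
  have hR : 0 < (-1) ^ (l + i) * (rootPoly l r).eval (v i) :=
    neg_one_pow_mul_eval_rootPoly_pos hi (fun _ hm ↦ hv.lt_of_lt hm hi)
      fun _ hmi hml ↦ hv.lt_of_le hmi hml.le
  refine le_of_neg_one_pow_mul_eval_rootPoly_nonneg (show i < l + 1 by omega)
    (fun m hm ↦ (hw.lt m (by omega)).trans (hv.lt_of_lt hm hi))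
    (fun m him hml ↦ (hv.lt i hi).trans (hw.lt_of_lt him (by omega))) ?_
  rw [hH, eval_add, eval_rootPoly_self (show i < l + 1 by omega), eval_mul, eval_C, zero_add]
  convert mul_nonneg hc hR.le using 1
  ring

theorem Interlaced.step {l : ℕ} {p q r : ℕ → ℝ} {a b c : ℝ} (h : Interlaced l p q r) (ha : 0 < a)
    (hb : 0 < b) (hc : 0 ≤ c) :
    ∃ u v w, Interlaced (l + 1) u v w ∧
      rootPoly (l + 1) u = X * rootPoly l r + C a * rootPoly l p ∧
      rootPoly (l + 1) v = rootPoly (l + 1) u + C b * rootPoly l q ∧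
      rootPoly (l + 1) w = rootPoly (l + 1) v + C c * rootPoly l r := by
  set F := X * rootPoly l r + C a * rootPoly l p
  set G := F + C b * rootPoly l q with hG
  set H := G + C c * rootPoly l r with hH
  have hXR : (X * rootPoly l r).natDegree = l + 1 := by
    rw [monic_X.natDegree_mul monic_rootPoly, natDegree_X, natDegree_rootPoly, add_comm]
  obtain ⟨hFm, hFd⟩ := (monic_X.mul monic_rootPoly).add_C_mul_of_natDegree_le hXR
    (natDegree_rootPoly (x := p)).le a
  obtain ⟨hGm, hGd⟩ := hFm.add_C_mul_of_natDegree_le hFd (natDegree_rootPoly (x := q)).le b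
  obtain ⟨hHm, hHd⟩ := hGm.add_C_mul_of_natDegree_le hGd (natDegree_rootPoly (x := r)).le c
  have hFs : ∀ j ≤ l, 0 < (-1) ^ (l + j) * F.eval (r j) := fun j hj ↦ h.sign_X_mul_add ha hj
  have hGs : ∀ j ≤ l, 0 < (-1) ^ (l + j) * G.eval (r j) := fun j hj ↦ by
    simp only [hG, eval_add, eval_mul, eval_C]
    nlinarith [hFs j hj, h.sign_q hj]
  have hHs : ∀ j ≤ l, 0 < (-1) ^ (l + j) * H.eval (r j) := fun j hj ↦ by
    simp only [hH, eval_add, eval_mul, eval_C]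
    nlinarith [hGs j hj, h.sign_r hj]
  have hr : ∀ i < l, r i < r (i + 1) := fun _ ↦ h.r_lt_succ
  obtain ⟨u, hFu, hu⟩ := exists_interlaces_of_sign_alternation hFm hFd hr hFs
  obtain ⟨v, hGv, hv⟩ := exists_interlaces_of_sign_alternation hGm hGd hr hGs
  obtain ⟨w, hHw, hw⟩ := exists_interlaces_of_sign_alternation hHm hHd hr hHs
  have hpu : ∀ j < l, p j < u (j + 1) := fun j hj ↦ h.p_lt_of_interlaces hu ha hFu.symm hj
  have hvu : ∀ i ≤ l, v i < u i := fun i hi ↦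
    h.lt_of_interlaces hu hv hpu hb (by rw [← hGv, ← hFu]) hi
  have hwv : ∀ i ≤ l, w i ≤ v i := fun i hi ↦
    hv.le_of_eq_add_C_mul hw hc (by rw [← hHw, ← hGv]) hi
  -- `w` matters only below `l + 1`; its value at `l + 1` is reset to the sentinel `0`.
  refine ⟨u, v, Function.update w (l + 1) 0, ⟨by simp, fun i hi ↦ ?_, fun i hi ↦ hvu i (by omega),
    fun i hi ↦ ?_⟩, hFu.symm, by rw [← hGv, ← hFu], ?_⟩
  · rw [Function.update_of_ne (by omega)]
    exact hwv i (by omega)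
  · rcases (Nat.lt_succ_iff.1 hi).lt_or_eq with hi | rfl
    · rw [Function.update_of_ne (by omega)]
      exact (hu.lt i hi.le).trans (hw.lt_succ i hi)
    · simpa [h.r_last] using hu.lt i le_rfl
  · rw [rootPoly, prod_congr rfl fun i hi ↦ by rw [Function.update_of_ne (by simp at hi; omega)],
      ← rootPoly, ← hHw, ← hGv]

section Recurrence

variable {n l : ℕ}

lemma cP_pos (hl : 0 < l) (h : 3 * l ≤ n) : 0 < cP n l := by
  have : (3 * l : ℝ) ≤ n := by exact_mod_cast h
  have : (1 : ℝ) ≤ l := by exact_mod_cast hl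
  unfold cP
  refine mul_pos (mul_pos (mul_pos ?_ ?_) ?_) ?_ <;> linarith

lemma cQ_pos (hl : 0 < l) (h : 3 * l ≤ n) : 0 < cQ n l := by
  have : (3 * l : ℝ) ≤ n := by exact_mod_cast h
  have : (1 : ℝ) ≤ l := by exact_mod_cast hl
  unfold cQ
  refine mul_pos (mul_pos (mul_pos ?_ ?_) ?_) ?_ <;> linarith

lemma cR_nonneg (h : 3 * l ≤ n) : 0 ≤ cR n l := by
  have : (3 * l : ℝ) ≤ n := by exact_mod_cast h
  unfold cR
  refine mul_nonneg (mul_nonneg (mul_nonneg ?_ ?_) ?_) ?_ <;> positivity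

end Recurrence

theorem exists_interlaced_PQR {n l : ℕ} (h : 3 * l ≤ n) :
    ∃ p q r, Interlaced l p q r ∧ PQR n l = (rootPoly l p, rootPoly l q, rootPoly l r) := by
  induction l with
  | zero =>
    refine ⟨0, 0, 0, ⟨rfl, nofun, nofun, nofun⟩, ?_⟩
    simp [PQR, rootPoly_zero]
  | succ l ih =>
    obtain ⟨p, q, r, hl, hPQR⟩ := ih (by omega)
    obtain ⟨u, v, w, hl', hu, hv, hw⟩ :=
      hl.step (cP_pos l.succ_pos h) (cQ_pos l.succ_pos h) (cR_nonneg h)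
    exact ⟨u, v, w, hl', by simp only [PQR, hPQR, hu, hv, hw]⟩

theorem PQR_real_rooted_general (n : ℕ) (l : ℕ) (hl : l ≤ n / 3) :
    ∀ p ∈ [(PQR n l).1, (PQR n l).2.1, (PQR n l).2.2],
      p.Monic ∧ p.natDegree = l ∧
        (1 ≤ l → ∀ i ≤ l, 0 < p.coeff i) ∧
        NegRealSimpleRoots p := by
  obtain ⟨p, q, r, h, hPQR⟩ := exists_interlaced_PQR (n := n) (l := l) (by omega)
  intro F hF
  obtain ⟨x, hx, hneg, rfl⟩ :
      ∃ x, Set.InjOn x (Set.Iio l) ∧ (∀ i < l, x i < 0) ∧ F = rootPoly l x := by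
    simp only [hPQR, List.mem_cons, List.not_mem_nil, or_false] at hF
    rcases hF with rfl | rfl | rfl
    exacts [⟨p, h.p_strictMonoOn.injOn, fun _ ↦ h.p_neg, rfl⟩,
      ⟨q, h.q_strictMonoOn.injOn, fun _ ↦ h.q_neg, rfl⟩,
      ⟨r, h.r_strictMonoOn.injOn.mono Set.Iio_subset_Iic_self, fun _ ↦ h.r_neg, rfl⟩]
  exact ⟨monic_rootPoly, natDegree_rootPoly, fun _ _ hi ↦ coeff_rootPoly_pos hneg hi,
    negRealSimpleRoots_rootPoly hx hneg⟩

/-- For `n ≥ 3` and `0 ≤ l ≤ ⌊n/3⌋`, each of `P_l, Q_l, R_l` is monic of degree `l`,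
has positive coefficients (for `l ≥ 1`), and all its roots are real, negative and simple. -/
theorem PQR_real_rooted (n : ℕ) (hn : 3 ≤ n) (l : ℕ) (hl : l ≤ n / 3) :
    ∀ p ∈ [(PQR n l).1, (PQR n l).2.1, (PQR n l).2.2],
      p.Monic ∧ p.natDegree = l ∧
        (1 ≤ l → ∀ i ≤ l, 0 < p.coeff i) ∧
        NegRealSimpleRoots p :=
  PQR_real_rooted_general n l hl
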